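/- Let H₁, H₂ be finite-dimensional complex Hilbert spaces, ρ a density operator on H₁ ⊗ H₂, and POVMs Mₙ^{(sₙ)} on Hₙ with finite outcome sets Λₙ for sₙ ∈ {1,…,Sₙ}, n ∈ {1,2}. Then the quantum correlation scenario with distributions P_{(s₁,s₂)}(λ₁,λ₂) = tr[ρ (M₁^{(s₁)}(λ₁) ⊗ M₂^{(s₂)}(λ₂))] admits a deterministic LqHV model: there exist a finite set Ω, a function ν : Ω → ℝ with ∑ν = 1, and functions f_{n,sₙ} : Ω → Λₙ with P_{(s₁,s₂)}(λ₁,λ₂) = ν({ω : f_{1,s₁}(ω) = λ₁ and f_{2,s₂}(ω) = λ₂}) for all settings and outcomes. -/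

import Mathlib

/-!
Summing the Born rule over one party's outcomes replaces that party's effects by their sum,
the identity, so a quantum family `P` is nonsignaling: it has marginals `μ₁ s`, `μ₂ t` that do
not depend on the other party's setting. For such a family the signed weight on
`Ω = (ι₁ → Λ₁) × (ι₂ → Λ₂)`
  `ν (g, h) = ∏ μ₁ (g) ∏ μ₂ (h)`
  `  + ∑ s t, (P s t (g s) (h t) - μ₁ s (g s) μ₂ t (h t)) ∏_{s' ≠ s} μ₁ (g) ∏_{t' ≠ t} μ₂ (h)`
reproduces every `P s₀ t₀`: the product term contributes `μ₁ s₀ a μ₂ t₀ b`, and the correction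
for `(s, t)` has vanishing row and column sums, so after summing out all other coordinates it
survives only when `(s, t) = (s₀, t₀)`.
-/

open Matrix Kronecker ComplexOrder Finset

section ProductWeights

variable {ι Λ R : Type*} [Fintype ι] [DecidableEq ι] [Fintype Λ] [DecidableEq Λ] [CommSemiring R]

theorem sum_filter_apply_eq_prod (F : ι → Λ → R) (i : ι) (a : Λ) :
    ∑ g ∈ univ.filter (fun g : ι → Λ => g i = a), ∏ j, F j (g j)
      = F i a * ∏ j ∈ univ.erase i, ∑ x, F j x := by
  let G := Function.update F i fun x => if x = a then F i a else 0
  have hG : ∀ j ∈ univ.erase i, G j = F j := fun j hj =>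
    Function.update_of_ne (ne_of_mem_erase hj) _ F
  have hprod : ∀ g : ι → Λ, ∏ j, G j (g j) = if g i = a then ∏ j, F j (g j) else 0 := by
    intro g
    rw [← mul_prod_erase univ _ (mem_univ i), ← mul_prod_erase univ _ (mem_univ i),
      prod_congr rfl fun j hj => by rw [hG j hj]]
    split_ifs with h <;> simp [G, h]
  rw [sum_filter, ← Fintype.sum_congr _ _ hprod, ← Fintype.prod_sum,
    ← mul_prod_erase univ _ (mem_univ i), prod_congr rfl fun j hj => by rw [hG j hj]]
  simp [G]

variable {μ : ι → Λ → R}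

theorem sum_filter_prod_eq (hμ : ∀ j, ∑ x, μ j x = 1) (i : ι) (a : Λ) :
    ∑ g ∈ univ.filter (fun g : ι → Λ => g i = a), ∏ j, μ j (g j) = μ i a := by
  rw [sum_filter_apply_eq_prod, prod_eq_one fun j _ => hμ j, mul_one]

theorem sum_filter_mul_prod_erase (hμ : ∀ j, ∑ x, μ j x = 1) (φ : Λ → R) (i i₀ : ι) (a : Λ) :
    ∑ g ∈ univ.filter (fun g : ι → Λ => g i₀ = a), φ (g i) * ∏ j ∈ univ.erase i, μ j (g j)
      = if i = i₀ then φ a else μ i₀ a * ∑ x, φ x := by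
  have hupd : ∀ g : ι → Λ, φ (g i) * ∏ j ∈ univ.erase i, μ j (g j)
      = ∏ j, Function.update μ i φ j (g j) := by
    intro g
    rw [← mul_prod_erase univ _ (mem_univ i), Function.update_self]
    exact congrArg _ (prod_congr rfl fun j hj => by rw [Function.update_of_ne (ne_of_mem_erase hj)])
  simp_rw [hupd, sum_filter_apply_eq_prod]
  split_ifs with h
  · subst h
    rw [Function.update_self, prod_eq_one fun j hj => by
      rw [Function.update_of_ne (ne_of_mem_erase hj), hμ], mul_one]
  · rw [Function.update_of_ne (Ne.symm h), prod_eq_single_of_mem i (mem_erase.2 ⟨h, mem_univ i⟩)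
      fun j _ hji => by rw [Function.update_of_ne hji, hμ], Function.update_self]

theorem sum_mul_prod_erase (hμ : ∀ j, ∑ x, μ j x = 1) (φ : Λ → R) (i : ι) :
    ∑ g : ι → Λ, φ (g i) * ∏ j ∈ univ.erase i, μ j (g j) = ∑ x, φ x := by
  rw [← sum_fiberwise univ (fun g : ι → Λ => g i)]
  exact sum_congr rfl fun a _ => by rw [sum_filter_mul_prod_erase hμ, if_pos rfl]

end ProductWeights

section Model

variable {ι₁ ι₂ Λ₁ Λ₂ R : Type*} [DecidableEq Λ₁] [DecidableEq Λ₂] [AddCommMonoidWithOne R]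

def IsDeterministicLqhvModel {Ω : Type*} [Fintype Ω] (P : ι₁ → ι₂ → Λ₁ → Λ₂ → R) (ν : Ω → R)
    (f₁ : ι₁ → Ω → Λ₁) (f₂ : ι₂ → Ω → Λ₂) : Prop :=
  (∑ ω, ν ω) = 1 ∧
    ∀ s₁ s₂ a b, P s₁ s₂ a b = ∑ ω ∈ univ.filter (fun ω : Ω => f₁ s₁ ω = a ∧ f₂ s₂ ω = b), ν ω

theorem IsDeterministicLqhvModel.comp_equiv {Ω Ω' : Type*} [Fintype Ω] [Fintype Ω']
    {P : ι₁ → ι₂ → Λ₁ → Λ₂ → R} {ν : Ω → R} {f₁ : ι₁ → Ω → Λ₁} {f₂ : ι₂ → Ω → Λ₂}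
    (h : IsDeterministicLqhvModel P ν f₁ f₂) (e : Ω' ≃ Ω) :
    IsDeterministicLqhvModel P (ν ∘ e) (fun s => f₁ s ∘ e) (fun t => f₂ t ∘ e) := by
  refine ⟨(e.sum_comp ν).trans h.1, fun s₁ s₂ a b => ?_⟩
  rw [h.2, sum_filter, sum_filter, ← e.sum_comp]
  rfl

end Model

section Nonsignaling

variable {ι₁ ι₂ Λ₁ Λ₂ R : Type*} [Fintype Λ₁] [Fintype Λ₂] [CommRing R]

structure NonsignalingMarginals (P : ι₁ → ι₂ → Λ₁ → Λ₂ → R) (μ₁ : ι₁ → Λ₁ → R)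
    (μ₂ : ι₂ → Λ₂ → R) : Prop where
  sum_right : ∀ s t a, ∑ b, P s t a b = μ₁ s a
  sum_left : ∀ s t b, ∑ a, P s t a b = μ₂ t b
  sum_marginal₁ : ∀ s, ∑ a, μ₁ s a = 1
  sum_marginal₂ : ∀ t, ∑ b, μ₂ t b = 1

variable {P : ι₁ → ι₂ → Λ₁ → Λ₂ → R} {μ₁ : ι₁ → Λ₁ → R} {μ₂ : ι₂ → Λ₂ → R}

theorem NonsignalingMarginals.sum_connected_right (h : NonsignalingMarginals P μ₁ μ₂)
    (s : ι₁) (t : ι₂) (a : Λ₁) : ∑ b, (P s t a b - μ₁ s a * μ₂ t b) = 0 := by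
  rw [sum_sub_distrib, ← mul_sum, h.sum_right, h.sum_marginal₂, mul_one, sub_self]

theorem NonsignalingMarginals.sum_connected_left (h : NonsignalingMarginals P μ₁ μ₂)
    (s : ι₁) (t : ι₂) (b : Λ₂) : ∑ a, (P s t a b - μ₁ s a * μ₂ t b) = 0 := by
  rw [sum_sub_distrib, ← sum_mul, h.sum_left, h.sum_marginal₁, one_mul, sub_self]

variable [Fintype ι₁] [Fintype ι₂] [DecidableEq ι₁] [DecidableEq ι₂]

theorem sum_pair_mul_prod_erase [DecidableEq Λ₂] (hμ₂ : ∀ t, ∑ b, μ₂ t b = 1)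
    {c : Λ₁ → Λ₂ → R} (hrow : ∀ x, ∑ y, c x y = 0) (s : ι₁) (t : ι₂) :
    ∑ ω : (ι₁ → Λ₁) × (ι₂ → Λ₂), c (ω.1 s) (ω.2 t)
        * ((∏ j ∈ univ.erase s, μ₁ j (ω.1 j)) * ∏ k ∈ univ.erase t, μ₂ k (ω.2 k)) = 0 := by
  rw [Fintype.sum_prod_type]
  refine sum_eq_zero fun g _ => ?_
  simp_rw [mul_left_comm (c (g s) _), ← mul_sum, sum_mul_prod_erase hμ₂, hrow, mul_zero]

theorem sum_filter_pair_mul_prod_erase [DecidableEq Λ₁] [DecidableEq Λ₂]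
    (hμ₁ : ∀ s, ∑ a, μ₁ s a = 1) (hμ₂ : ∀ t, ∑ b, μ₂ t b = 1) {c : Λ₁ → Λ₂ → R}
    (hrow : ∀ x, ∑ y, c x y = 0) (hcol : ∀ y, ∑ x, c x y = 0) (s s₀ : ι₁) (t t₀ : ι₂)
    (a : Λ₁) (b : Λ₂) :
    ∑ ω ∈ univ.filter (fun ω : (ι₁ → Λ₁) × (ι₂ → Λ₂) => ω.1 s₀ = a ∧ ω.2 t₀ = b),
        c (ω.1 s) (ω.2 t)
          * ((∏ j ∈ univ.erase s, μ₁ j (ω.1 j)) * ∏ k ∈ univ.erase t, μ₂ k (ω.2 k))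
      = if s = s₀ ∧ t = t₀ then c a b else 0 := by
  have inner : ∀ g : ι₁ → Λ₁,
      ∑ h ∈ univ.filter (fun h : ι₂ → Λ₂ => h t₀ = b),
          c (g s) (h t) * ((∏ j ∈ univ.erase s, μ₁ j (g j)) * ∏ k ∈ univ.erase t, μ₂ k (h k))
        = (if t = t₀ then c (g s) b else 0) * ∏ j ∈ univ.erase s, μ₁ j (g j) := by
    intro g
    simp_rw [mul_left_comm (c (g s) _), ← mul_sum, sum_filter_mul_prod_erase hμ₂, hrow, mul_zero,
      mul_comm (∏ j ∈ univ.erase s, μ₁ j (g j))]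
  rw [← univ_product_univ, filter_product (fun g : ι₁ → Λ₁ => g s₀ = a)
    (fun h : ι₂ → Λ₂ => h t₀ = b), sum_product, sum_congr rfl fun g _ => inner g]
  by_cases ht : t = t₀
  · simp only [ht, if_true, and_true, sum_filter_mul_prod_erase hμ₁ (fun x => c x b), hcol,
      mul_zero]
  · simp [ht]

def masterWeight (P : ι₁ → ι₂ → Λ₁ → Λ₂ → R) (μ₁ : ι₁ → Λ₁ → R) (μ₂ : ι₂ → Λ₂ → R)
    (ω : (ι₁ → Λ₁) × (ι₂ → Λ₂)) : R :=
  (∏ s, μ₁ s (ω.1 s)) * (∏ t, μ₂ t (ω.2 t)) +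
    ∑ s, ∑ t, (P s t (ω.1 s) (ω.2 t) - μ₁ s (ω.1 s) * μ₂ t (ω.2 t))
      * ((∏ j ∈ univ.erase s, μ₁ j (ω.1 j)) * ∏ k ∈ univ.erase t, μ₂ k (ω.2 k))

namespace NonsignalingMarginals

theorem sum_masterWeight [DecidableEq Λ₂] (h : NonsignalingMarginals P μ₁ μ₂) :
    ∑ ω, masterWeight P μ₁ μ₂ ω = 1 := by
  have hprod : ∑ ω : (ι₁ → Λ₁) × (ι₂ → Λ₂), (∏ s, μ₁ s (ω.1 s)) * ∏ t, μ₂ t (ω.2 t) = 1 := by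
    rw [Fintype.sum_prod_type]
    dsimp only
    rw [← sum_mul_sum, ← Fintype.prod_sum, ← Fintype.prod_sum, prod_eq_one fun s _ =>
      h.sum_marginal₁ s, prod_eq_one fun t _ => h.sum_marginal₂ t, one_mul]
  simp only [masterWeight, sum_add_distrib]
  rw [hprod, sum_comm, sum_congr rfl fun s _ => sum_comm]
  simp [sum_pair_mul_prod_erase h.sum_marginal₂ (h.sum_connected_right _ _)]

theorem sum_filter_masterWeight [DecidableEq Λ₁] [DecidableEq Λ₂]
    (h : NonsignalingMarginals P μ₁ μ₂) (s₀ : ι₁) (t₀ : ι₂) (a : Λ₁) (b : Λ₂) :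
    ∑ ω ∈ univ.filter (fun ω : (ι₁ → Λ₁) × (ι₂ → Λ₂) => ω.1 s₀ = a ∧ ω.2 t₀ = b),
      masterWeight P μ₁ μ₂ ω = P s₀ t₀ a b := by
  have hprod : ∑ ω ∈ univ.filter
      (fun ω : (ι₁ → Λ₁) × (ι₂ → Λ₂) => ω.1 s₀ = a ∧ ω.2 t₀ = b),
      (∏ s, μ₁ s (ω.1 s)) * ∏ t, μ₂ t (ω.2 t) = μ₁ s₀ a * μ₂ t₀ b := by
    rw [← univ_product_univ, filter_product (fun g : ι₁ → Λ₁ => g s₀ = a)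
      (fun h : ι₂ → Λ₂ => h t₀ = b), sum_product]
    dsimp only
    rw [← sum_mul_sum, sum_filter_prod_eq h.sum_marginal₁, sum_filter_prod_eq h.sum_marginal₂]
  simp only [masterWeight, sum_add_distrib]
  rw [hprod, sum_comm, sum_congr rfl fun s _ => sum_comm]
  simp [sum_filter_pair_mul_prod_erase h.sum_marginal₁ h.sum_marginal₂
    (h.sum_connected_right _ _) (h.sum_connected_left _ _), ite_and]

theorem isDeterministicLqhvModel [DecidableEq Λ₁] [DecidableEq Λ₂]
    (h : NonsignalingMarginals P μ₁ μ₂) :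
    IsDeterministicLqhvModel P (masterWeight P μ₁ μ₂) (fun s ω => ω.1 s) (fun t ω => ω.2 t) :=
  ⟨h.sum_masterWeight, fun s t a b => (h.sum_filter_masterWeight s t a b).symm⟩

end NonsignalingMarginals

end Nonsignaling

section Quantum

variable {d₁ d₂ : Type*} [Fintype d₁] [Fintype d₂]

theorem sum_trace_mul_kronecker_right {Λ : Type*} [Fintype Λ]
    (ρ : Matrix (d₁ × d₂) (d₁ × d₂) ℂ) (A : Matrix d₁ d₁ ℂ) (M : Λ → Matrix d₂ d₂ ℂ) :
    ∑ b, (ρ * (A ⊗ₖ M b)).trace = (ρ * (A ⊗ₖ ∑ b, M b)).trace := by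
  have : A ⊗ₖ ∑ b, M b = ∑ b, A ⊗ₖ M b := by
    ext i j
    simp [kroneckerMap_apply, Matrix.sum_apply, mul_sum]
  rw [this, mul_sum, trace_sum]

theorem sum_trace_mul_kronecker_left {Λ : Type*} [Fintype Λ]
    (ρ : Matrix (d₁ × d₂) (d₁ × d₂) ℂ) (M : Λ → Matrix d₁ d₁ ℂ) (B : Matrix d₂ d₂ ℂ) :
    ∑ a, (ρ * (M a ⊗ₖ B)).trace = (ρ * ((∑ a, M a) ⊗ₖ B)).trace := by
  have : (∑ a, M a) ⊗ₖ B = ∑ a, M a ⊗ₖ B := by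
    ext i j
    simp [kroneckerMap_apply, Matrix.sum_apply, sum_mul]
  rw [this, mul_sum, trace_sum]

variable [DecidableEq d₁] [DecidableEq d₂]

theorem nonsignalingMarginals_of_born_rule {ι₁ ι₂ Λ₁ Λ₂ : Type*} [Fintype Λ₁] [Fintype Λ₂]
    {ρ : Matrix (d₁ × d₂) (d₁ × d₂) ℂ} (hρtr : ρ.trace = 1)
    {M₁ : ι₁ → Λ₁ → Matrix d₁ d₁ ℂ} {M₂ : ι₂ → Λ₂ → Matrix d₂ d₂ ℂ}
    (hM₁norm : ∀ s, ∑ a, M₁ s a = 1) (hM₂norm : ∀ t, ∑ b, M₂ t b = 1)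
    {P : ι₁ → ι₂ → Λ₁ → Λ₂ → ℝ}
    (hP : ∀ s t a b, (P s t a b : ℂ) = (ρ * (M₁ s a ⊗ₖ M₂ t b)).trace) :
    NonsignalingMarginals P (fun s a => (ρ * (M₁ s a ⊗ₖ 1)).trace.re)
      (fun t b => (ρ * (1 ⊗ₖ M₂ t b)).trace.re) where
  sum_right s t a := by
    rw [← hM₂norm t, ← sum_trace_mul_kronecker_right, Complex.re_sum]
    simp [← hP]
  sum_left s t b := by
    rw [← hM₁norm s, ← sum_trace_mul_kronecker_left, Complex.re_sum]
    simp [← hP]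
  sum_marginal₁ s := by
    rw [← Complex.re_sum, sum_trace_mul_kronecker_left, hM₁norm, one_kronecker_one, mul_one, hρtr,
      Complex.one_re]
  sum_marginal₂ t := by
    rw [← Complex.re_sum, sum_trace_mul_kronecker_right, hM₂norm, one_kronecker_one, mul_one, hρtr,
      Complex.one_re]

end Quantum

theorem quantum_scenario_deterministic_lqhv_general
    {d₁ d₂ : Type*} [Fintype d₁] [Fintype d₂] [DecidableEq d₁] [DecidableEq d₂]
    {Λ₁ Λ₂ : Type*} [Fintype Λ₁] [Fintype Λ₂] [DecidableEq Λ₁] [DecidableEq Λ₂]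
    {S₁ S₂ : ℕ}
    (ρ : Matrix (d₁ × d₂) (d₁ × d₂) ℂ) (hρtr : ρ.trace = 1)
    (M₁ : Fin S₁ → Λ₁ → Matrix d₁ d₁ ℂ) (M₂ : Fin S₂ → Λ₂ → Matrix d₂ d₂ ℂ)
    (hM₁norm : ∀ s₁, ∑ a, M₁ s₁ a = 1)
    (hM₂norm : ∀ s₂, ∑ b, M₂ s₂ b = 1)
    (P : Fin S₁ → Fin S₂ → Λ₁ → Λ₂ → ℝ)
    (hP : ∀ s₁ s₂ a b, (P s₁ s₂ a b : ℂ) = (ρ * (M₁ s₁ a ⊗ₖ M₂ s₂ b)).trace) :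
    ∃ (Ω : Type) (_ : Fintype Ω) (_ : DecidableEq Ω) (ν : Ω → ℝ)
        (f₁ : Fin S₁ → Ω → Λ₁) (f₂ : Fin S₂ → Ω → Λ₂),
      (∑ ω, ν ω) = 1 ∧
      ∀ s₁ s₂ a b,
        P s₁ s₂ a b
          = ∑ ω ∈ Finset.univ.filter (fun ω : Ω => f₁ s₁ ω = a ∧ f₂ s₂ ω = b), ν ω := by
  have hmodel :=
    (nonsignalingMarginals_of_born_rule hρtr hM₁norm hM₂norm hP).isDeterministicLqhvModel
  exact ⟨_, inferInstance, inferInstance, _, _, _,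
    hmodel.comp_equiv (Fintype.equivFin ((Fin S₁ → Λ₁) × (Fin S₂ → Λ₂))).symm⟩

/-- Corollary 1, bipartite finite version: every bipartite quantum
correlation scenario admits a deterministic LqHV model. -/
theorem quantum_scenario_deterministic_lqhv
    {d₁ d₂ : Type*} [Fintype d₁] [Fintype d₂] [DecidableEq d₁] [DecidableEq d₂]
    {Λ₁ Λ₂ : Type*} [Fintype Λ₁] [Fintype Λ₂] [DecidableEq Λ₁] [DecidableEq Λ₂]
    [Nonempty Λ₁] [Nonempty Λ₂] {S₁ S₂ : ℕ}
    (ρ : Matrix (d₁ × d₂) (d₁ × d₂) ℂ) (hρ : ρ.PosSemidef) (hρtr : ρ.trace = 1)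
    (M₁ : Fin S₁ → Λ₁ → Matrix d₁ d₁ ℂ) (M₂ : Fin S₂ → Λ₂ → Matrix d₂ d₂ ℂ)
    (hM₁pos : ∀ s₁ a, (M₁ s₁ a).PosSemidef) (hM₁norm : ∀ s₁, ∑ a, M₁ s₁ a = 1)
    (hM₂pos : ∀ s₂ b, (M₂ s₂ b).PosSemidef) (hM₂norm : ∀ s₂, ∑ b, M₂ s₂ b = 1)
    (P : Fin S₁ → Fin S₂ → Λ₁ → Λ₂ → ℝ)
    (hP : ∀ s₁ s₂ a b, (P s₁ s₂ a b : ℂ) = (ρ * (M₁ s₁ a ⊗ₖ M₂ s₂ b)).trace) :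
    ∃ (Ω : Type) (_ : Fintype Ω) (_ : DecidableEq Ω) (ν : Ω → ℝ)
        (f₁ : Fin S₁ → Ω → Λ₁) (f₂ : Fin S₂ → Ω → Λ₂),
      (∑ ω, ν ω) = 1 ∧
      ∀ s₁ s₂ a b,
        P s₁ s₂ a b
          = ∑ ω ∈ Finset.univ.filter (fun ω : Ω => f₁ s₁ ω = a ∧ f₂ s₂ ω = b), ν ω :=
  quantum_scenario_deterministic_lqhv_general ρ hρtr M₁ M₂ hM₁norm hM₂norm P hP
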